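/- arXiv:cs/0002014 — 2 statements merged into one kernel-verified Lean document; each statement's English description precedes it below -/
import Mathlib

section
/- The configuration space of two distinct labeled points on the Y-graph (three edges joined at a single central vertex), restricted to configurations where the two points lie on distinct edges (including the case that one point is at the central vertex), is homeomorphic to the product S^1 × (0,1], i.e., a punctured disc. -/
open Set

/-- Equivalence gluing the three copies of `[0,1]` at their `0`-endpoints. -/
def yRel (a b : Fin 3 × Icc (0:ℝ) 1) : Prop :=
  a = b ∨ ((a.2 : ℝ) = 0 ∧ (b.2 : ℝ) = 0)

def ySetoid : Setoid (Fin 3 × Icc (0:ℝ) 1) where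
  r := yRel
  iseqv := by
    constructor
    · intro a; exact Or.inl rfl
    · rintro a b (rfl | ⟨h1, h2⟩); exacts [Or.inl rfl, Or.inr ⟨h2, h1⟩]
    · rintro a b c (rfl | ⟨h1, h2⟩) (rfl | ⟨h3, h4⟩)
      exacts [Or.inl rfl, Or.inr ⟨h3, h4⟩, Or.inr ⟨h1, h2⟩, Or.inr ⟨h1, h4⟩]

/-- The Y-graph: three edges `[0,1]` joined at a single central vertex. -/
def YGraph : Type := Quotient ySetoid

instance : TopologicalSpace YGraph := instTopologicalSpaceQuotient

/-- The point of the Y-graph on edge `i` at parameter `t`. -/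
def YGraph.pt (i : Fin 3) (t : Icc (0:ℝ) 1) : YGraph := Quotient.mk ySetoid (i, t)

/-- The subspace `D` of the configuration space of two distinct labeled points on the
Y-graph consisting of configurations in which the two points do not lie in the
interior of the same edge (one point may be at the central vertex). -/
def DSpace : Set (YGraph × YGraph) :=
  {p | p.1 ≠ p.2 ∧
    ¬ ∃ (i : Fin 3) (t s : Icc (0:ℝ) 1), 0 < (t : ℝ) ∧ 0 < (s : ℝ) ∧
      p.1 = YGraph.pt i t ∧ p.2 = YGraph.pt i s}

/-!
Send edge `i` of the Y-graph to the segment `[0, ωⁱ]` in `ℂ`, `ω = e^{2πi/3}`; this is an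
embedding, and a configuration in `D` becomes a pair `(t ωⁱ, s ωʲ)` with `i ≠ j`. Scaling by the
sup norm `max t s ∈ (0, 1]` identifies `D` with `L × (0, 1]`, where `L` is the set of such pairs of
sup norm `1`, and `L ≃ S¹` via the direction of `x - y`: for `i ≠ j` the cones spanned by `ωⁱ` and
`-ωʲ` are the six sectors of angle `π/3`, so every nonzero `z` is `t ωⁱ - s ωʲ` with `t, s ≥ 0`,
uniquely up to the choice of index when `t` or `s` vanishes. The direction map is then a
continuous bijection from the compact `L` onto the circle.
-/

open Pointwise Metric

section Cone

variable {E : Type*} [NormedAddCommGroup E] [NormedSpace ℝ E] {I : Set ℝ} {K : Set E}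

lemma norm_mem_and_inv_norm_smul_mem (hI : I ⊆ Ioi 0) (hK : K ⊆ sphere 0 1) {x : E}
    (hx : x ∈ I • K) : ‖x‖ ∈ I ∧ ‖x‖⁻¹ • x ∈ K := by
  obtain ⟨r, hr, k, hk, rfl⟩ := hx
  have hr0 : 0 < r := hI hr
  rw [norm_smul_of_nonneg hr0.le, mem_sphere_zero_iff_norm.mp (hK hk), mul_one, smul_smul,
    inv_mul_cancel₀ hr0.ne', one_smul]
  exact ⟨hr, hk⟩

noncomputable def smulHomeomorphProd (hI : I ⊆ Ioi 0) (hK : K ⊆ sphere 0 1) :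
    ↥(I • K) ≃ₜ K × I where
  toFun x := (⟨‖(x : E)‖⁻¹ • (x : E), (norm_mem_and_inv_norm_smul_mem hI hK x.2).2⟩,
    ⟨‖(x : E)‖, (norm_mem_and_inv_norm_smul_mem hI hK x.2).1⟩)
  invFun y := ⟨(y.2 : ℝ) • (y.1 : E), smul_mem_smul y.2.2 y.1.2⟩
  left_inv x := Subtype.ext <| smul_inv_smul₀
    (hI (norm_mem_and_inv_norm_smul_mem hI hK x.2).1).ne' _
  right_inv y := by
    have hr : 0 < (y.2 : ℝ) := hI y.2.2
    have hnorm : ‖(y.2 : ℝ) • (y.1 : E)‖ = y.2 := by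
      rw [norm_smul_of_nonneg hr.le, mem_sphere_zero_iff_norm.mp (hK y.1.2), mul_one]
    ext
    · simp only [hnorm, inv_smul_smul₀ hr.ne']
    · simp only [hnorm]
  continuous_toFun := by
    have hnorm : Continuous fun x : ↥(I • K) => ‖(x : E)‖ := by fun_prop
    refine .prodMk (.subtype_mk ((hnorm.inv₀ fun x => ?_).smul continuous_subtype_val) _)
      (hnorm.subtype_mk _)
    exact (hI (norm_mem_and_inv_norm_smul_mem hI hK x.2).1).ne'
  continuous_invFun := by fun_prop

end Cone

section Coefficients

variable {ι : Type*} [DecidableEq ι] {i j k l : ι} {a b c d : ℝ}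

lemma posPart_single_sub_single (hij : i ≠ j) (ha : 0 ≤ a) (hb : 0 ≤ b) :
    (Pi.single i a - Pi.single j b : ι → ℝ)⁺ = Pi.single i a := by
  ext n
  by_cases hi : n = i
  · subst hi; simp [hij, ha]
  · by_cases hj : n = j
    · subst hj; simp [hi, hb]
    · simp [hi, hj]

lemma negPart_single_sub_single (hij : i ≠ j) (ha : 0 ≤ a) (hb : 0 ≤ b) :
    (Pi.single i a - Pi.single j b : ι → ℝ)⁻ = Pi.single j b := by
  ext n
  by_cases hi : n = i
  · subst hi; simp [hij, ha]
  · by_cases hj : n = j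
    · subst hj; simp [hi, hb]
    · simp [hi, hj]

end Coefficients

lemma Fin.exists_ne_and_ne (i j : Fin 3) : ∃ m, m ≠ i ∧ m ≠ j := by
  revert i j; decide

lemma Fin.eq_or_eq_of_ne_of_ne {p q r s : Fin 3} (hpq : p ≠ q) (hrs : r ≠ s) :
    p = r ∨ p = s ∨ q = r ∨ q = s := by
  revert p q r s; decide

lemma nonpos_of_forall_eq_add {w w' : Fin 3 → ℝ} {e : ℝ} (h : ∀ n, w n = w' n + e)
    {p q r s : Fin 3} (hpq : p ≠ q) (hrs : r ≠ s) (hp : w p ≤ 0) (hq : w q ≤ 0)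
    (hr : 0 ≤ w' r) (hs : 0 ≤ w' s) : e ≤ 0 := by
  rcases Fin.eq_or_eq_of_ne_of_ne hpq hrs with rfl | rfl | rfl | rfl <;> linarith [h p, h q]

section FinThree

variable {i j k l : Fin 3} {a b c d : ℝ}

/-- Each side has two nonnegative and two nonpositive coordinates, so by pigeonhole
(`nonpos_of_forall_eq_add`) the shift `e` vanishes. -/
lemma single_sub_single_eq_of_forall_eq_add (hij : i ≠ j) (hkl : k ≠ l) (ha : 0 ≤ a)
    (hb : 0 ≤ b) (hc : 0 ≤ c) (hd : 0 ≤ d) {e : ℝ}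
    (h : ∀ n, (Pi.single i a - Pi.single j b : Fin 3 → ℝ) n
      = (Pi.single k c - Pi.single l d : Fin 3 → ℝ) n + e) :
    (Pi.single i a - Pi.single j b : Fin 3 → ℝ) = Pi.single k c - Pi.single l d := by
  set w : Fin 3 → ℝ := Pi.single i a - Pi.single j b
  set w' : Fin 3 → ℝ := Pi.single k c - Pi.single l d
  obtain ⟨m, hmi, hmj⟩ := Fin.exists_ne_and_ne i j
  obtain ⟨m', hmk, hml⟩ := Fin.exists_ne_and_ne k l
  have hwi : w i = a := by simp [w, hij]
  have hwj : w j = -b := by simp [w, hij.symm]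
  have hwm : w m = 0 := by simp [w, hmi, hmj]
  have hw'k : w' k = c := by simp [w', hkl]
  have hw'l : w' l = -d := by simp [w', hkl.symm]
  have hw'm' : w' m' = 0 := by simp [w', hmk, hml]
  have he : e = 0 := by
    refine le_antisymm (nonpos_of_forall_eq_add h hmj.symm hmk.symm (by linarith) (by linarith)
      (by linarith) (by linarith)) (neg_nonpos.mp ?_)
    exact nonpos_of_forall_eq_add (w := w') (w' := w) (fun n => by linarith [h n]) hml.symm
      hmi.symm (by linarith) (by linarith) (by linarith) (by linarith)
  ext n
  simp [h n, he]

/-- The median coordinate of `v` plays the role of `e`. -/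
lemma exists_single_sub_single_add_const (v : Fin 3 → ℝ) :
    ∃ i j, i ≠ j ∧ ∃ a b : ℝ, 0 ≤ a ∧ 0 ≤ b ∧ ∃ e : ℝ,
      v = Pi.single i a - Pi.single j b + fun _ => e := by
  set σ := Tuple.sort v
  have h01 : v (σ 0) ≤ v (σ 1) := Tuple.monotone_sort v (by decide)
  have h12 : v (σ 1) ≤ v (σ 2) := Tuple.monotone_sort v (by decide)
  refine ⟨σ 2, σ 0, σ.injective.ne (by decide), v (σ 2) - v (σ 1), v (σ 1) - v (σ 0),
    by linarith, by linarith, v (σ 1), ?_⟩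
  ext n
  obtain ⟨k, rfl⟩ := σ.surjective n
  fin_cases k <;> simp [σ.injective.eq_iff]

end FinThree

namespace YGraph

/-- `spoke i = ωⁱ` with `ω = e^{2πi/3}`. -/
noncomputable def spoke : Fin 3 → ℂ := ![1, ⟨-1 / 2, √3 / 2⟩, ⟨-1 / 2, -(√3 / 2)⟩]

lemma norm_spoke (i : Fin 3) : ‖spoke i‖ = 1 := by
  have h3 : √3 ^ 2 = 3 := Real.sq_sqrt (by norm_num)
  rw [Complex.norm_def, Real.sqrt_eq_one, Complex.normSq_apply]
  fin_cases i <;> simp [spoke] <;> nlinarith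

lemma spoke_injective : Function.Injective spoke := by
  have h3 : 0 < √3 := by positivity
  intro i j h
  fin_cases i <;> fin_cases j <;> simp [spoke, Complex.ext_iff] at h ⊢ <;> linarith

lemma eq_of_linearCombination_spoke_eq_zero {v : Fin 3 → ℝ}
    (h : Fintype.linearCombination ℝ spoke v = 0) (n : Fin 3) : v n = v 0 := by
  have h3 : 0 < √3 := by positivity
  rw [Fintype.linearCombination_apply, Fin.sum_univ_three, Complex.ext_iff] at h
  simp [spoke] at h
  obtain ⟨hre, him⟩ := h
  have h12 : v 1 = v 2 := by nlinarith
  fin_cases n <;> simp <;> linarith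

lemma linearCombination_spoke_surjective :
    Function.Surjective (Fintype.linearCombination ℝ spoke) := by
  intro z
  refine ⟨![z.re + z.im / √3, 2 * z.im / √3, 0], ?_⟩
  have h3 : √3 ≠ 0 := by positivity
  rw [Fintype.linearCombination_apply, Fin.sum_univ_three, Complex.ext_iff]
  simp [spoke]
  constructor
  · ring
  · field_simp

lemma linearCombination_spoke_const (c : ℝ) :
    Fintype.linearCombination ℝ spoke (fun _ => c) = 0 := by
  rw [Fintype.linearCombination_apply, Fin.sum_univ_three, Complex.ext_iff]
  simp [spoke]
  linarith

variable {i j k l : Fin 3} {a b c d t s : ℝ}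

lemma smul_spoke_eq_smul_spoke_iff (ht : 0 ≤ t) (hs : 0 ≤ s) :
    t • spoke i = s • spoke j ↔ t = s ∧ (i = j ∨ t = 0) := by
  refine ⟨fun h => ?_, ?_⟩
  · have hts : t = s := by
      simpa [norm_smul, norm_spoke, abs_of_nonneg ht, abs_of_nonneg hs] using congrArg norm h
    subst hts
    rw [← sub_eq_zero, ← smul_sub, smul_eq_zero, sub_eq_zero, spoke_injective.eq_iff] at h
    exact ⟨rfl, h.symm⟩
  · rintro ⟨rfl, rfl | rfl⟩ <;> simp

lemma eq_of_smul_spoke_eq (ht : 0 ≤ t) (hs : 0 < s) (h : t • spoke i = s • spoke j) : i = j := by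
  obtain ⟨rfl, hij | rfl⟩ := (smul_spoke_eq_smul_spoke_iff ht hs.le).mp h
  exacts [hij, absurd rfl hs.ne']

lemma smul_spoke_ne_smul_spoke (hij : i ≠ j) (ht : 0 ≤ t) (hs : 0 ≤ s) (hts : 0 < max t s) :
    t • spoke i ≠ s • spoke j := by
  rw [Ne, smul_spoke_eq_smul_spoke_iff ht hs]
  rintro ⟨rfl, hij' | rfl⟩
  exacts [hij hij', by simp at hts]

lemma smul_spoke_eq_of_sub_eq (hij : i ≠ j) (hkl : k ≠ l) (ha : 0 ≤ a) (hb : 0 ≤ b)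
    (hc : 0 ≤ c) (hd : 0 ≤ d) (h : a • spoke i - b • spoke j = c • spoke k - d • spoke l) :
    a • spoke i = c • spoke k ∧ b • spoke j = d • spoke l := by
  set L := Fintype.linearCombination ℝ spoke
  have hL (i : Fin 3) (a : ℝ) : L (Pi.single i a) = a • spoke i :=
    Fintype.linearCombination_apply_single ℝ spoke i a
  set w : Fin 3 → ℝ := Pi.single i a - Pi.single j b
  set w' : Fin 3 → ℝ := Pi.single k c - Pi.single l d
  have hker : L (w - w') = 0 := by simp only [w, w', map_sub, hL, h, sub_self]
  have hw : w = w' := single_sub_single_eq_of_forall_eq_add hij hkl ha hb hc hd (e := (w - w') 0)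
    fun n => by linarith [eq_of_linearCombination_spoke_eq_zero hker n, Pi.sub_apply w w' n]
  have hpos : (Pi.single i a : Fin 3 → ℝ) = Pi.single k c := by
    rw [← posPart_single_sub_single hij ha hb, ← posPart_single_sub_single hkl hc hd]
    exact congrArg (·⁺) hw
  have hneg : (Pi.single j b : Fin 3 → ℝ) = Pi.single l d := by
    rw [← negPart_single_sub_single hij ha hb, ← negPart_single_sub_single hkl hc hd]
    exact congrArg (·⁻) hw
  rw [← hL, ← hL, ← hL, ← hL, hpos, hneg]
  exact ⟨rfl, rfl⟩

lemma exists_smul_spoke_sub_smul_spoke (z : ℂ) :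
    ∃ i j, i ≠ j ∧ ∃ a b : ℝ, 0 ≤ a ∧ 0 ≤ b ∧ a • spoke i - b • spoke j = z := by
  obtain ⟨v, rfl⟩ := linearCombination_spoke_surjective z
  obtain ⟨i, j, hij, a, b, ha, hb, e, rfl⟩ := exists_single_sub_single_add_const v
  refine ⟨i, j, hij, a, b, ha, hb, ?_⟩
  simp [linearCombination_spoke_const]

lemma norm_smul_spoke_prod (ht : 0 ≤ t) (hs : 0 ≤ s) :
    ‖(t • spoke i, s • spoke j)‖ = max t s := by
  simp [Prod.norm_mk, norm_spoke, abs_of_nonneg ht, abs_of_nonneg hs]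

/-- `max t s` is the sup norm of the pair in `ℂ × ℂ`. -/
def spokePairs (I : Set ℝ) : Set (ℂ × ℂ) :=
  {p | ∃ i j, i ≠ j ∧ ∃ t s : ℝ, 0 ≤ t ∧ 0 ≤ s ∧ max t s ∈ I ∧ p = (t • spoke i, s • spoke j)}

lemma spokePairs_one_subset_sphere : spokePairs {1} ⊆ sphere 0 1 := by
  rintro _ ⟨i, j, -, t, s, ht, hs, h1, rfl⟩
  rw [mem_sphere_zero_iff_norm, norm_smul_spoke_prod ht hs]
  exact h1

lemma spokePairs_eq_smul {I : Set ℝ} (hI : I ⊆ Ioi 0) : spokePairs I = I • spokePairs {1} := by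
  ext p
  constructor
  · rintro ⟨i, j, hij, t, s, ht, hs, hts, rfl⟩
    have hr : 0 < max t s := hI hts
    refine ⟨max t s, hts, ((max t s)⁻¹ • t • spoke i, (max t s)⁻¹ • s • spoke j),
      ⟨i, j, hij, (max t s)⁻¹ * t, (max t s)⁻¹ * s, by positivity, by positivity, ?_,
        by simp only [smul_smul]⟩, ?_⟩
    · rw [← mul_max_of_nonneg _ _ (inv_nonneg.mpr hr.le), inv_mul_cancel₀ hr.ne']
      exact mem_singleton 1
    · simp only [Prod.smul_mk, smul_inv_smul₀ hr.ne']
  · rintro ⟨r, hr, _, ⟨i, j, hij, t, s, ht, hs, hts, rfl⟩, rfl⟩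
    have hr0 : 0 < r := hI hr
    refine ⟨i, j, hij, r * t, r * s, by positivity, by positivity, ?_,
      by simp only [Prod.smul_mk, smul_smul]⟩
    rw [← mul_max_of_nonneg _ _ hr0.le, mem_singleton_iff.mp hts, mul_one]
    exact hr

lemma fst_sub_snd_ne_zero {p : ℂ × ℂ} (hp : p ∈ spokePairs {1}) : p.1 - p.2 ≠ 0 := by
  obtain ⟨i, j, hij, t, s, ht, hs, hts, rfl⟩ := hp
  refine sub_ne_zero.mpr (smul_spoke_ne_smul_spoke hij ht hs ?_)
  rw [mem_singleton_iff.mp hts]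
  exact one_pos

lemma isCompact_spokePairs_one : IsCompact (spokePairs {1}) := by
  have hT : IsCompact {ts : ℝ × ℝ | 0 ≤ ts.1 ∧ 0 ≤ ts.2 ∧ max ts.1 ts.2 = 1} := by
    have hbox : IsCompact (Icc (0 : ℝ) 1 ×ˢ Icc (0 : ℝ) 1) := isCompact_Icc.prod isCompact_Icc
    refine hbox.of_isClosed_subset ?_ ?_
    · exact (isClosed_le continuous_const continuous_fst).inter
        ((isClosed_le continuous_const continuous_snd).inter
          (isClosed_eq (continuous_fst.max continuous_snd) continuous_const))
    · rintro ⟨t, s⟩ ⟨ht, hs, hts⟩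
      exact ⟨⟨ht, hts ▸ le_max_left t s⟩, ⟨hs, hts ▸ le_max_right t s⟩⟩
  have hunion : spokePairs {1} = ⋃ ij ∈ {ij : Fin 3 × Fin 3 | ij.1 ≠ ij.2},
      (fun ts : ℝ × ℝ => (ts.1 • spoke ij.1, ts.2 • spoke ij.2)) ''
        {ts | 0 ≤ ts.1 ∧ 0 ≤ ts.2 ∧ max ts.1 ts.2 = 1} := by
    ext p
    simp only [spokePairs, mem_singleton_iff, mem_iUnion, mem_image, Prod.exists]
    constructor
    · rintro ⟨i, j, hij, t, s, ht, hs, hts, rfl⟩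
      exact ⟨i, j, hij, t, s, ⟨ht, hs, hts⟩, rfl⟩
    · rintro ⟨i, j, hij, t, s, ⟨ht, hs, hts⟩, rfl⟩
      exact ⟨i, j, hij, t, s, ht, hs, hts, rfl⟩
  rw [hunion]
  exact (toFinite _).isCompact_biUnion fun ij _ => hT.image (by fun_prop)

lemma eq_of_sameRay_fst_sub_snd {p q : ℂ × ℂ} (hp : p ∈ spokePairs {1}) (hq : q ∈ spokePairs {1})
    (h : SameRay ℝ (p.1 - p.2) (q.1 - q.2)) : p = q := by
  obtain ⟨r₁, r₂, hr₁, hr₂, hr⟩ := h.exists_pos (fst_sub_snd_ne_zero hp) (fst_sub_snd_ne_zero hq)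
  have hpq : r₁ • p = r₂ • q := by
    obtain ⟨i, j, hij, t, s, ht, hs, -, rfl⟩ := hp
    obtain ⟨k, l, hkl, t', s', ht', hs', -, rfl⟩ := hq
    simp only [smul_sub, smul_smul] at hr
    obtain ⟨e₁, e₂⟩ := smul_spoke_eq_of_sub_eq hij hkl (by positivity) (by positivity)
      (by positivity) (by positivity) hr
    simp only [Prod.smul_mk, smul_smul, e₁, e₂]
  have hr : r₁ = r₂ := by
    simpa [norm_smul, mem_sphere_zero_iff_norm.mp (spokePairs_one_subset_sphere hp),
      mem_sphere_zero_iff_norm.mp (spokePairs_one_subset_sphere hq), abs_of_pos hr₁,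
      abs_of_pos hr₂] using congrArg norm hpq
  subst hr
  exact smul_right_injective _ hr₁.ne' hpq

lemma exists_sameRay_fst_sub_snd {z : ℂ} (hz : z ≠ 0) :
    ∃ p ∈ spokePairs {1}, SameRay ℝ (p.1 - p.2) z := by
  obtain ⟨i, j, hij, a, b, ha, hb, rfl⟩ := exists_smul_spoke_sub_smul_spoke z
  have hab : 0 < max a b := by
    by_contra! h
    obtain rfl : a = 0 := le_antisymm ((le_max_left a b).trans h) ha
    obtain rfl : b = 0 := le_antisymm ((le_max_right 0 b).trans h) hb
    simp at hz
  have hmem : (a • spoke i, b • spoke j) ∈ spokePairs (Ioi 0) := ⟨i, j, hij, a, b, ha, hb, hab, rfl⟩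
  rw [spokePairs_eq_smul subset_rfl] at hmem
  obtain ⟨r, hr, p, hp, hrp⟩ := hmem
  refine ⟨p, hp, ?_⟩
  have hdiff : a • spoke i - b • spoke j = r • (p.1 - p.2) := by
    rw [smul_sub]
    exact congrArg (fun q : ℂ × ℂ => q.1 - q.2) hrp.symm
  rw [hdiff]
  exact SameRay.sameRay_pos_smul_right _ hr

noncomputable def toComplex : YGraph → ℂ :=
  Quotient.lift (fun p => (p.2 : ℝ) • spoke p.1) <| by
    rintro a b (rfl | ⟨ha, hb⟩)
    · rfl
    · simp [ha, hb]

lemma toComplex_pt (i : Fin 3) (t : Icc (0 : ℝ) 1) : toComplex (pt i t) = (t : ℝ) • spoke i :=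
  rfl

lemma exists_pt (x : YGraph) : ∃ i t, pt i t = x := by
  obtain ⟨⟨i, t⟩, rfl⟩ := Quotient.exists_rep x
  exact ⟨i, t, rfl⟩

lemma toComplex_injective : Function.Injective toComplex := by
  intro x y h
  obtain ⟨i, t, rfl⟩ := exists_pt x
  obtain ⟨j, s, rfl⟩ := exists_pt y
  obtain ⟨hts, rfl | ht⟩ := (smul_spoke_eq_smul_spoke_iff t.2.1 s.2.1).mp h
  · rw [Subtype.ext hts]
  · exact Quotient.sound (Or.inr ⟨ht, hts ▸ ht⟩)

instance : CompactSpace YGraph := Quotient.compactSpace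

lemma isEmbedding_toComplex : Topology.IsEmbedding toComplex :=
  (Continuous.quotient_lift (by fun_prop) _ |>.isClosedEmbedding toComplex_injective).isEmbedding

lemma image_toComplex_DSpace :
    Prod.map toComplex toComplex '' DSpace = spokePairs (Ioc 0 1) := by
  ext p
  constructor
  · rintro ⟨⟨x, y⟩, ⟨hxy, hedge⟩, rfl⟩
    obtain ⟨i, t, rfl⟩ := exists_pt x
    obtain ⟨j, s, rfl⟩ := exists_pt y
    have hts : 0 < max (t : ℝ) s := by
      by_contra! h
      exact hxy <| Quotient.sound <| Or.inr ⟨le_antisymm ((le_max_left _ _).trans h) t.2.1,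
        le_antisymm ((le_max_right _ _).trans h) s.2.1⟩
    have hmem : max (t : ℝ) s ∈ Ioc 0 1 := ⟨hts, max_le t.2.2 s.2.2⟩
    by_cases hij : i = j
    · subst hij
      obtain ⟨k, hk⟩ := exists_ne i
      by_cases ht : (t : ℝ) = 0
      · exact ⟨k, i, hk, t, s, t.2.1, s.2.1, hmem, by simp [toComplex_pt, ht]⟩
      · have hs : (s : ℝ) = 0 := by
          by_contra hs
          exact hedge ⟨i, t, s, t.2.1.lt_of_ne (Ne.symm ht), s.2.1.lt_of_ne (Ne.symm hs), rfl, rfl⟩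
        exact ⟨i, k, hk.symm, t, s, t.2.1, s.2.1, hmem, by simp [toComplex_pt, hs]⟩
    · exact ⟨i, j, hij, t, s, t.2.1, s.2.1, hmem, rfl⟩
  · rintro ⟨i, j, hij, t, s, ht, hs, ⟨hpos, hle⟩, rfl⟩
    refine ⟨(pt i ⟨t, ht, (le_max_left t s).trans hle⟩, pt j ⟨s, hs, (le_max_right t s).trans hle⟩),
      ⟨fun h => smul_spoke_ne_smul_spoke hij ht hs hpos (congrArg toComplex h), ?_⟩, rfl⟩
    rintro ⟨k, t', s', ht', hs', h₁, h₂⟩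
    exact hij ((eq_of_smul_spoke_eq ht ht' (congrArg toComplex h₁)).trans
      (eq_of_smul_spoke_eq hs hs' (congrArg toComplex h₂)).symm)

noncomputable def direction (p : spokePairs {1}) : Circle :=
  ⟨‖(p : ℂ × ℂ).1 - (p : ℂ × ℂ).2‖⁻¹ • ((p : ℂ × ℂ).1 - (p : ℂ × ℂ).2),
    mem_sphere_zero_iff_norm.mpr (norm_smul_inv_norm (fst_sub_snd_ne_zero p.2))⟩

lemma continuous_direction : Continuous direction := by
  have hd : Continuous fun p : spokePairs {1} => (p : ℂ × ℂ).1 - (p : ℂ × ℂ).2 := by fun_prop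
  exact .subtype_mk ((hd.norm.inv₀ fun p => norm_ne_zero_iff.mpr (fst_sub_snd_ne_zero p.2)).smul
    hd) _

lemma direction_bijective : Function.Bijective direction := by
  constructor
  · intro p q h
    refine Subtype.ext (eq_of_sameRay_fst_sub_snd p.2 q.2 ?_)
    exact (sameRay_iff_inv_norm_smul_eq_of_ne (fst_sub_snd_ne_zero p.2)
      (fst_sub_snd_ne_zero q.2)).mpr (congrArg Subtype.val h)
  · intro u
    obtain ⟨p, hp, hpu⟩ := exists_sameRay_fst_sub_snd u.coe_ne_zero
    refine ⟨⟨p, hp⟩, Circle.ext ?_⟩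
    have := (sameRay_iff_inv_norm_smul_eq_of_ne (fst_sub_snd_ne_zero hp) u.coe_ne_zero).mp hpu
    rwa [Circle.norm_coe, inv_one, one_smul] at this

noncomputable def spokePairsOneHomeomorphCircle : spokePairs {1} ≃ₜ Circle :=
  haveI := isCompact_iff_compactSpace.mp isCompact_spokePairs_one
  continuous_direction.homeoOfEquivCompactToT2 (f := .ofBijective _ direction_bijective)

end YGraph

/-- the subspace `D` of the configuration space of two distinct points
on the Y-graph where the points lie on distinct edges is homeomorphic to
`S¹ × (0,1]`, a punctured disc. -/
theorem distinct_edge_configuration_space_punctured_disc :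
    Nonempty (DSpace ≃ₜ Circle × Ioc (0:ℝ) 1) := by
  have hIoc : Ioc (0 : ℝ) 1 ⊆ Ioi 0 := Ioc_subset_Ioi_self
  have hembed := YGraph.isEmbedding_toComplex.prodMap YGraph.isEmbedding_toComplex
  have himage : Prod.map YGraph.toComplex YGraph.toComplex '' DSpace
      = Ioc (0 : ℝ) 1 • YGraph.spokePairs {1} :=
    YGraph.image_toComplex_DSpace.trans (YGraph.spokePairs_eq_smul hIoc)
  exact ⟨(hembed.homeomorphImage DSpace).trans <| (Homeomorph.setCongr himage).trans <|
    (smulHomeomorphProd hIoc YGraph.spokePairs_one_subset_sphere).trans <|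
    YGraph.spokePairsOneHomeomorphCircle.prodCongr (Homeomorph.refl _)⟩
end

section
/- For the circulating vector field on the configuration space C of two points on the Y-graph, the function Φ(x,y) defined as 1 − |‖x‖ − ‖y‖| when x and y lie on the same edge, and 1 − max(‖x‖,‖y‖) when they lie on distinct edges, is continuous on C and takes values in [0,1). -/
open Set

/-- The value `‖x‖ ∈ [0,1]` of a point of the Y-graph (distance to the vertex). -/
def YGraph.val : YGraph → ℝ :=
  Quotient.lift (fun p : Fin 3 × Icc (0:ℝ) 1 => (p.2 : ℝ)) <| by
    rintro a b (rfl | ⟨h1, h2⟩); exacts [rfl, by simp [h1, h2]]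

/-- Two points of the Y-graph lie on a common (closed) edge. -/
def YGraph.sameEdge (x y : YGraph) : Prop :=
  ∃ (i : Fin 3) (t s : Icc (0:ℝ) 1), x = YGraph.pt i t ∧ y = YGraph.pt i s

open Classical in
/-- The Lyapunov function of the circulating flow:
`Φ(x,y) = 1 − |‖x‖ − ‖y‖|` if `x, y` lie on the same edge, and
`Φ(x,y) = 1 − max(‖x‖, ‖y‖)` if they lie on distinct edges. -/
noncomputable def PhiCirc (p : YGraph × YGraph) : ℝ :=
  if YGraph.sameEdge p.1 p.2 then 1 - |YGraph.val p.1 - YGraph.val p.2|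
  else 1 - max (YGraph.val p.1) (YGraph.val p.2)

/-- The configuration space `C` of two distinct labeled points on the Y-graph. -/
def ConfigY : Set (YGraph × YGraph) := {p | p.1 ≠ p.2}

/-! ### Auxiliary material -/

/-- Edge-value function: `‖x‖` if `x` lies on edge `i`, else `0`. -/
def edgeVal (i : Fin 3) : YGraph → ℝ :=
  Quotient.lift (fun p : Fin 3 × Icc (0:ℝ) 1 => if p.1 = i then (p.2 : ℝ) else 0) <| by
    rintro a b (rfl | ⟨h1, h2⟩)
    · rfl
    · simp [h1, h2]

lemma edgeVal_pt (i j : Fin 3) (t : Icc (0:ℝ) 1) :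
    edgeVal i (YGraph.pt j t) = if j = i then (t : ℝ) else 0 := rfl

lemma val_pt (i : Fin 3) (t : Icc (0:ℝ) 1) : YGraph.val (YGraph.pt i t) = (t : ℝ) := rfl

lemma continuous_yval : Continuous YGraph.val :=
  Continuous.quotient_lift (continuous_subtype_val.comp continuous_snd) _

lemma continuous_edgeVal (i : Fin 3) : Continuous (edgeVal i) := by
  apply Continuous.quotient_lift
  have h : (fun p : Fin 3 × Icc (0:ℝ) 1 => if p.1 = i then (p.2 : ℝ) else 0)
      = fun p => (if p.1 = i then (1:ℝ) else 0) * (p.2 : ℝ) := by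
    ext p; by_cases h : p.1 = i <;> simp [h]
  rw [h]
  exact (((continuous_of_discreteTopology
      (f := fun k : Fin 3 => if k = i then (1:ℝ) else 0)).comp
    continuous_fst).mul (continuous_subtype_val.comp continuous_snd))

lemma edgeVal_nonneg (i : Fin 3) (x : YGraph) : 0 ≤ edgeVal i x := by
  induction x using Quotient.inductionOn with
  | h p =>
    show (0:ℝ) ≤ if p.1 = i then (p.2 : ℝ) else 0
    split
    · exact p.2.2.1
    · exact le_refl 0

/-- The key pointwise formula for `Φ`, valid everywhere. -/
lemma phi_pt (i j : Fin 3) (t s : Icc (0:ℝ) 1) :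
    PhiCirc (YGraph.pt i t, YGraph.pt j s)
      = 1 - max (t : ℝ) (s : ℝ)
        + ∑ m : Fin 3, min (edgeVal m (YGraph.pt i t)) (edgeVal m (YGraph.pt j s)) := by
  unfold PhiCirc
  by_cases h : YGraph.sameEdge (YGraph.pt i t, YGraph.pt j s).1 (YGraph.pt i t, YGraph.pt j s).2
  · rw [if_pos h]
    obtain ⟨k, u, v, hx, hy⟩ := h
    simp only at hx hy
    rw [hx, hy, val_pt, val_pt]
    -- value of x, y
    have hvx : (u : ℝ) = YGraph.val (YGraph.pt i t) := by
      rw [hx]; exact (val_pt k u).symm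
    have hvy : (v : ℝ) = YGraph.val (YGraph.pt j s) := by
      rw [hy]; exact (val_pt k v).symm
    rw [val_pt] at hvx; rw [val_pt] at hvy
    have hsum : ∑ m : Fin 3,
        min (edgeVal m (YGraph.pt k u)) (edgeVal m (YGraph.pt k v)) = min (u : ℝ) (v : ℝ) := by
      have h1 : ∀ m : Fin 3, min (edgeVal m (YGraph.pt k u)) (edgeVal m (YGraph.pt k v))
          = if k = m then min (u : ℝ) (v : ℝ) else 0 := by
        intro m; rw [edgeVal_pt, edgeVal_pt]; split <;> simp
      simp only [h1]
      simp
    rw [hsum, ← hvx, ← hvy]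
    have h3 := max_sub_min_eq_abs (u : ℝ) (v : ℝ)
    have h4 : |(u : ℝ) - (v : ℝ)| = |(v : ℝ) - (u : ℝ)| := abs_sub_comm _ _
    linarith
  · rw [if_neg h]
    simp only at h
    have hij : i ≠ j := by
      rintro rfl
      exact h ⟨i, t, s, rfl, rfl⟩
    have hsum : ∑ m : Fin 3,
        min (edgeVal m (YGraph.pt i t)) (edgeVal m (YGraph.pt j s)) = 0 := by
      apply Finset.sum_eq_zero
      intro m _
      rcases eq_or_ne i m with rfl | hi
      · have h2 : edgeVal i (YGraph.pt j s) = 0 := by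
          rw [edgeVal_pt, if_neg (fun hh => hij hh.symm)]
        rw [h2, min_eq_right (edgeVal_nonneg _ _)]
      · have h2 : edgeVal m (YGraph.pt i t) = 0 := by
          rw [edgeVal_pt, if_neg hi]
        rw [h2, min_eq_left (edgeVal_nonneg _ _)]
    rw [hsum, val_pt, val_pt]
    ring

lemma phi_eq : PhiCirc = fun p =>
    1 - max (YGraph.val p.1) (YGraph.val p.2)
      + ∑ m : Fin 3, min (edgeVal m p.1) (edgeVal m p.2) := by
  funext p
  obtain ⟨x, y⟩ := p
  exact Quotient.inductionOn₂ x y (fun a b => phi_pt a.1 b.1 a.2 b.2)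

lemma range_pt (i j : Fin 3) (t s : Icc (0:ℝ) 1)
    (hp : YGraph.pt i t ≠ YGraph.pt j s) :
    PhiCirc (YGraph.pt i t, YGraph.pt j s) ∈ Ico (0:ℝ) 1 := by
  obtain ⟨ht0, ht1⟩ := t.2
  obtain ⟨hs0, hs1⟩ := s.2
  unfold PhiCirc
  by_cases h : YGraph.sameEdge (YGraph.pt i t, YGraph.pt j s).1 (YGraph.pt i t, YGraph.pt j s).2
  · rw [if_pos h]
    obtain ⟨k, u, v, hx, hy⟩ := h
    simp only at hx hy
    rw [hx, hy, val_pt, val_pt]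
    rw [hx, hy] at hp
    obtain ⟨hu0, hu1⟩ := u.2
    obtain ⟨hv0, hv1⟩ := v.2
    have huv : (u : ℝ) ≠ (v : ℝ) := by
      intro hEq
      exact hp (by rw [Subtype.ext hEq])
    have habs : 0 < |(u : ℝ) - (v : ℝ)| := abs_pos.mpr (sub_ne_zero.mpr huv)
    have habs1 : |(u : ℝ) - (v : ℝ)| ≤ 1 := abs_le.mpr ⟨by linarith, by linarith⟩
    constructor <;> [linarith; linarith]
  · rw [if_neg h]
    simp only at h
    rw [val_pt, val_pt]
    have hmax : 0 < max (t : ℝ) (s : ℝ) := by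
      rcases lt_or_eq_of_le ht0 with h' | h'
      · exact lt_max_of_lt_left h'
      rcases lt_or_eq_of_le hs0 with h'' | h''
      · exact lt_max_of_lt_right h''
      · exact absurd (Quotient.sound (Or.inr ⟨h'.symm, h''.symm⟩)) hp
    have hmax1 : max (t : ℝ) (s : ℝ) ≤ 1 := max_le ht1 hs1
    constructor <;> [linarith; linarith]

/-- the function `Φ` is continuous on the configuration space `C` and
takes values in `[0,1)` there. -/
theorem PhiCirc_continuous_and_range :
    ContinuousOn PhiCirc ConfigY ∧ ∀ p ∈ ConfigY, PhiCirc p ∈ Ico (0:ℝ) 1 := by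
  constructor
  · rw [phi_eq]
    apply Continuous.continuousOn
    apply Continuous.add
    · exact continuous_const.sub ((continuous_yval.comp continuous_fst).max
        (continuous_yval.comp continuous_snd))
    · exact continuous_finset_sum _ fun m _ =>
        ((continuous_edgeVal m).comp continuous_fst).min
          ((continuous_edgeVal m).comp continuous_snd)
  · intro p hp
    obtain ⟨x, y⟩ := p
    revert hp
    exact Quotient.inductionOn₂ x y (fun a b hp => range_pt a.1 b.1 a.2 b.2 hp)
end
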